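/- Telescoped bound for v-iBPG: under the standing assumptions and the restricted relative smoothness exponent assumption, for the v-iBPG iterates, any k ≥ 0 and any x ∈ dom P ∩ dom φ, F(x^{k+1}) − F(x) ≤ ((α−1)/(k+α−1))^γ · ( τL·D_φ(x, z^0) + e(x)·Σ_{i=0}^{k} ϑ_i + Σ_{i=0}^{k} ( θ_i^{1−γ}·η_i·‖z̃^{i+1}‖ + θ_i^{1−γ}·η_i·‖x‖ + τL·μ_i + θ_i^{1−γ}·ν_i ) ), where e(x) := F(x) − F* and ϑ_{k+1} := θ_k^{−γ} − (1−θ_{k+1})·θ_{k+1}^{−γ}. -/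

import Mathlib

/-!
Each step satisfies
`F(x^{k+1}) − F(x) ≤ (1 − θ_k)(F(x^k) − F(x)) + θ_k^γ τL (D_φ(x, z^k) − D_φ(x, z^{k+1}) + μ_k)
  + θ_k (η_k ‖z̃^{k+1}‖ + η_k ‖x‖ + ν_k)`:
the restricted relative smoothness bound and the gradient inequality for `f` at `y^k` bound
`f(x^{k+1})`, convexity of `P` and the `ν_k`-subgradient `d` bound `P(x^{k+1})`, and the
remaining linear term is `⟪Δ^k, z̃^{k+1} − x⟫ ≤ η_k (‖z̃^{k+1}‖ + ‖x‖)` plus a multiple of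
`⟪∇φ(z^{k+1}) − ∇φ(z^k), x − z̃^{k+1}⟫`, which the three-point identity turns into Bregman
differences. After multiplying by `θ_k^{−γ}` the Bregman terms telescope, and the mismatch
`ϑ_{k+1} (F(x) − F(x^{k+1}))` between consecutive steps is at most `ϑ_{k+1} e(x)` because
`ϑ_{k+1} ≥ 0` and `F(x^{k+1}) ≥ F*`. Finally `θ_k ≤ (α − 1)/(k + α − 1)`.
-/

open Filter Topology RealInnerProductSpace

/-- The Bregman distance associated with the kernel `φ` whose gradient map is `gφ`. -/
noncomputable def breg {E : Type*} [NormedAddCommGroup E] [InnerProductSpace ℝ E]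
    (φ : E → ℝ) (gφ : E → E) (x y : E) : ℝ :=
  φ x - φ y - ⟪gφ y, x - y⟫

/-- The ν-subdifferential of `P` (a proper function with effective domain `domP`) at `x`. -/
def nuSubdiff {E : Type*} [NormedAddCommGroup E] [InnerProductSpace ℝ E]
    (P : E → ℝ) (domP : Set E) (ν : ℝ) (x : E) : Set E :=
  {d : E | ∀ u ∈ domP, P x + ⟪d, u - x⟫ - ν ≤ P u}

open Classical in
/-- Extension of a real-valued function with effective domain `dom` to an `EReal`-valued
function taking the value `⊤` outside `dom`. -/
noncomputable def extFun {E : Type*} (g : E → ℝ) (dom : Set E) : E → EReal :=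
  fun x => if x ∈ dom then (g x : EReal) else ⊤

/-- `φ` (with effective domain `domφ` and gradient map `gφ`) is essentially smooth. -/
def EssentiallySmooth {E : Type*} [NormedAddCommGroup E] [InnerProductSpace ℝ E]
    [FiniteDimensional ℝ E] (φ : E → ℝ) (domφ : Set E) (gφ : E → E) : Prop :=
  (interior domφ).Nonempty ∧
  (∀ x ∈ interior domφ, HasGradientAt φ (gφ x) x) ∧
  ∀ (u : ℕ → E) (u₀ : E), (∀ n, u n ∈ interior domφ) →
    Tendsto u atTop (𝓝 u₀) → u₀ ∈ frontier (interior domφ) →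
    Tendsto (fun n => ‖gφ (u n)‖) atTop atTop

/-- The standing assumptions (Assumption A) for the problem `inf {P x + f x : x ∈ Q}`. -/
structure Standing {E : Type*} [NormedAddCommGroup E] [InnerProductSpace ℝ E]
    [FiniteDimensional ℝ E] (Q domφ domP domf X : Set E)
    (φ P f : E → ℝ) (gφ gf : E → E) (L : ℝ) : Prop where
  hQclosed : IsClosed Q
  hQconv : Convex ℝ Q
  hQint : (interior Q).Nonempty
  hφconv : ConvexOn ℝ domφ φ
  hφstrict : StrictConvexOn ℝ (interior domφ) φ
  hφsmooth : EssentiallySmooth φ domφ gφ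
  hφQ : closure domφ = Q
  hPne : domP.Nonempty
  hPconv : ConvexOn ℝ domP P
  hPclosed : LowerSemicontinuous (extFun P domP)
  hPQ : (domP ∩ interior Q).Nonempty
  hfconv : ConvexOn ℝ domf f
  hfclosed : LowerSemicontinuous (extFun f domf)
  hfdom : domφ ⊆ domf
  hfgrad : ∀ x ∈ interior domφ, HasGradientAt f (gf x) x
  hXclosed : IsClosed X
  hXconv : Convex ℝ X
  hXsup : domP ∩ domφ ⊆ X
  hLnn : 0 ≤ L
  hrel : ∀ u ∈ interior domφ ∩ X, ∀ v ∈ domφ ∩ X,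
    f v ≤ f u + ⟪gf u, v - u⟫ + L * breg φ gφ v u

/-- Conditions on the inertial parameter sequence `{θ_k}` (with `θ_{−1} = θ_0 = 1`; the
sequence is represented over `ℕ`, using truncated subtraction so that `θ (k-1)` at `k = 0`
stands for `θ_{−1} = 1`): `θ_k ∈ (0,1]`, `θ_k ≤ (α−1)/(k+α−1)` for all `k ≥ 1`, where
`α ≥ γ+1`, and `ϑ_k := θ_{k−1}^{−γ} − (1−θ_k)·θ_k^{−γ} ≥ 0` for all `k ≥ 1`. -/
def ThetaSeq (γ α : ℝ) (θ : ℕ → ℝ) : Prop :=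
  θ 0 = 1 ∧ (∀ k, θ k ∈ Set.Ioc (0:ℝ) 1) ∧ γ + 1 ≤ α ∧
  (∀ k : ℕ, 1 ≤ k → θ k ≤ (α - 1) / ((k : ℝ) + α - 1)) ∧
  (∀ k : ℕ, 1 ≤ k → 0 ≤ (θ (k-1)) ^ (-γ) - (1 - θ k) * (θ k) ^ (-γ))

/-- The restricted relative smoothness exponent assumption (Assumption C): there are `τ > 0`
and `γ ≥ 1` such that
`D_f((1−θ)x + θz̃, (1−θ)x + θz) ≤ τ L θ^γ D_φ(z̃, z)` for all `x, z̃ ∈ dom P ∩ dom φ`,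
`z ∈ int dom φ ∩ X` and `θ ∈ (0,1]`. -/
def RestrictedRelSmoothExponent {E : Type*} [NormedAddCommGroup E] [InnerProductSpace ℝ E]
    (domφ domP X : Set E) (φ f : E → ℝ) (gφ gf : E → E) (L τ γ : ℝ) : Prop :=
  0 < τ ∧ 1 ≤ γ ∧
  ∀ xx ∈ domP ∩ domφ, ∀ zt ∈ domP ∩ domφ, ∀ z ∈ interior domφ ∩ X, ∀ θ : ℝ,
    θ ∈ Set.Ioc (0:ℝ) 1 →
    breg f gf ((1 - θ) • xx + θ • zt) ((1 - θ) • xx + θ • z) ≤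
      τ * L * θ ^ γ * breg φ gφ zt z

/-- The v-iBPG iterates with parameter sequence `θ` and inexactness tolerance sequences
`η`, `μ`, `ν`. -/
structure VIBPGIter {E : Type*} [NormedAddCommGroup E] [InnerProductSpace ℝ E]
    [FiniteDimensional ℝ E] (domφ domP X : Set E) (φ P : E → ℝ) (gφ gf : E → E)
    (L τ γ : ℝ) (θ η μ ν : ℕ → ℝ) (x y z zt : ℕ → E) : Prop where
  hη : ∀ k, 0 ≤ η k
  hμ : ∀ k, 0 ≤ μ k
  hν : ∀ k, 0 ≤ ν k
  hx0 : x 0 ∈ domP ∩ domφ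
  hy : ∀ k, y k = (1 - θ k) • x k + θ k • z k
  hz : ∀ k, z k ∈ X ∩ interior domφ
  hzt : ∀ k, zt (k+1) ∈ domP ∩ domφ
  hinex : ∀ k, ∃ d ∈ nuSubdiff P domP (ν k) (zt (k+1)),
    ‖d + gf (y k) + (τ * L * θ k ^ (γ - 1)) • (gφ (z (k+1)) - gφ (z k))‖ ≤ η k
  hdist : ∀ k, breg φ gφ (zt (k+1)) (z (k+1)) ≤ μ k
  hxrec : ∀ k, x (k+1) = (1 - θ k) • x k + θ k • zt (k+1)

theorem ConvexOn.add_inner_le_of_hasGradientAt {E : Type*} [NormedAddCommGroup E]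
    [InnerProductSpace ℝ E] [CompleteSpace E] {s : Set E} {g : E → ℝ} {G y u : E}
    (hg : ConvexOn ℝ s g) (hgrad : HasGradientAt g G y) (hy : y ∈ s) (hu : u ∈ s) :
    g y + ⟪G, u - y⟫ ≤ g u := by
  have hline : ConvexOn ℝ (AffineMap.lineMap (k := ℝ) y u ⁻¹' s) (g ∘ AffineMap.lineMap y u) :=
    hg.comp_affineMap _
  have hderiv : HasDerivAt (g ∘ AffineMap.lineMap (k := ℝ) y u) ⟪G, u - y⟫ 0 := by
    have hfd := hgrad.hasFDerivAt
    rw [← AffineMap.lineMap_apply_zero (k := ℝ) y u] at hfd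
    simpa using hfd.comp_hasDerivAt (0 : ℝ) AffineMap.hasDerivAt_lineMap
  have hslope := hline.le_slope_of_hasDerivAt (by simpa using hy) (by simpa using hu)
    zero_lt_one hderiv
  simp only [slope_def_field, Function.comp_apply, AffineMap.lineMap_apply_zero,
    AffineMap.lineMap_apply_one, sub_zero, div_one] at hslope
  linarith

section Bregman

variable {E : Type*} [NormedAddCommGroup E] [InnerProductSpace ℝ E]

theorem breg_nonneg [CompleteSpace E] {s : Set E} {φ : E → ℝ} {gφ : E → E} {u w : E}
    (hφ : ConvexOn ℝ s φ) (hgrad : HasGradientAt φ (gφ w) w) (hw : w ∈ s) (hu : u ∈ s) :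
    0 ≤ breg φ gφ u w := by
  have := hφ.add_inner_le_of_hasGradientAt hgrad hw hu
  rw [breg]
  linarith

theorem inner_sub_eq_breg_three_point (φ : E → ℝ) (gφ : E → E) (a b u w : E) :
    ⟪gφ b - gφ a, u - w⟫ =
      breg φ gφ u a - breg φ gφ u b + breg φ gφ w b - breg φ gφ w a := by
  simp only [breg, inner_sub_left, inner_sub_right]
  ring

theorem apply_combo_le_of_breg_le {g : E → ℝ} {gg : E → E} {a b c u y : E} {t K : ℝ}
    (ht0 : 0 ≤ t) (ht1 : t ≤ 1) (hy : y = (1 - t) • a + t • c)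
    (ha : g y + ⟪gg y, a - y⟫ ≤ g a) (hu : g y + ⟪gg y, u - y⟫ ≤ g u)
    (hK : breg g gg ((1 - t) • a + t • b) y ≤ K) :
    g ((1 - t) • a + t • b) ≤ (1 - t) * g a + t * g u + t * ⟪gg y, b - u⟫ + K := by
  have hconv := add_le_add (mul_le_mul_of_nonneg_left ha (sub_nonneg.2 ht1))
    (mul_le_mul_of_nonneg_left hu ht0)
  have hinner : ⟪gg y, (1 - t) • a + t • b - y⟫ - (1 - t) * ⟪gg y, a - y⟫
      - t * ⟪gg y, u - y⟫ = t * ⟪gg y, b - u⟫ := by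
    subst hy
    simp only [inner_sub_right, inner_add_right, real_inner_smul_right]
    ring
  rw [breg] at hK
  linarith

end Bregman

theorem rpow_neg_mul_add_le_of_le {t γ a a' B B' m e : ℝ} (ht : 0 < t)
    (h : a' ≤ (1 - t) * a + t ^ γ * (B - B' + m) + t * e) :
    t ^ (-γ) * a' + B' ≤ (1 - t) * t ^ (-γ) * a + B + (m + t ^ (1 - γ) * e) := by
  have hcancel : t ^ (-γ) * t ^ γ = 1 := by
    rw [← Real.rpow_add ht, neg_add_cancel, Real.rpow_zero]
  have hshift : t ^ (-γ) * t = t ^ (1 - γ) := by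
    rw [sub_eq_neg_add, Real.rpow_add ht, Real.rpow_one]
  have hscaled := mul_le_mul_of_nonneg_left h (Real.rpow_nonneg ht.le (-γ))
  calc t ^ (-γ) * a' + B'
      ≤ t ^ (-γ) * ((1 - t) * a + t ^ γ * (B - B' + m) + t * e) + B' := by linarith
    _ = (1 - t) * t ^ (-γ) * a + (t ^ (-γ) * t ^ γ) * (B - B' + m)
          + (t ^ (-γ) * t) * e + B' := by ring
    _ = _ := by rw [hcancel, hshift]; ring

theorem le_rpow_mul_of_rpow_neg_mul_le {t b γ a R : ℝ} (ht : 0 < t) (htb : t ≤ b)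
    (hγ : 0 ≤ γ) (hR : 0 ≤ R) (h : t ^ (-γ) * a ≤ R) : a ≤ b ^ γ * R := by
  have hcancel : t ^ γ * t ^ (-γ) = 1 := by
    rw [← Real.rpow_add ht, add_neg_cancel, Real.rpow_zero]
  calc a = t ^ γ * (t ^ (-γ) * a) := by rw [← mul_assoc, hcancel, one_mul]
    _ ≤ t ^ γ * R := mul_le_mul_of_nonneg_left h (Real.rpow_nonneg ht.le γ)
    _ ≤ b ^ γ * R := mul_le_mul_of_nonneg_right (Real.rpow_le_rpow ht.le htb hγ) hR

theorem add_le_sum_of_weighted_step {w c a D err : ℕ → ℝ} {e : ℝ} (hc0 : c 0 = 0)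
    (hgap : ∀ k, 0 ≤ w (k - 1) - c k) (he : 0 ≤ e) (ha : ∀ k, -e ≤ a (k + 1))
    (hstep : ∀ k, w k * a (k + 1) + D (k + 1) ≤ c k * a k + D k + err k) (k : ℕ) :
    w k * a (k + 1) + D (k + 1) ≤
      D 0 + e * ∑ i ∈ Finset.range (k + 1), (w (i - 1) - c i)
        + ∑ i ∈ Finset.range (k + 1), err i := by
  induction k with
  | zero =>
    have hgap0 := mul_nonneg he (hgap 0)
    have hstep0 := hstep 0
    simp only [zero_add, Finset.sum_range_one, Nat.zero_sub, hc0, zero_mul, sub_zero]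
      at hgap0 hstep0 ⊢
    linarith
  | succ n ih =>
    have hgain := mul_le_mul_of_nonneg_left (neg_le.1 (ha n)) (hgap (n + 1))
    simp only [Finset.sum_range_succ, Nat.add_sub_cancel] at ih hgain ⊢
    linarith [hstep (n + 1)]

namespace ThetaSeq

variable {γ α : ℝ} {θ : ℕ → ℝ}

theorem le_ratio (hθ : ThetaSeq γ α θ) (hγ : 0 < γ) (k : ℕ) :
    θ k ≤ (α - 1) / ((k : ℝ) + α - 1) := by
  obtain ⟨hθ0, -, hαγ, hθle, -⟩ := hθ
  rcases Nat.eq_zero_or_pos k with rfl | hk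
  · rw [hθ0, Nat.cast_zero, zero_add, div_self (by linarith)]
  · exact hθle k hk

theorem gap_nonneg (hθ : ThetaSeq γ α θ) (k : ℕ) :
    0 ≤ θ (k - 1) ^ (-γ) - (1 - θ k) * θ k ^ (-γ) := by
  obtain ⟨hθ0, -, -, -, hgap⟩ := hθ
  rcases Nat.eq_zero_or_pos k with rfl | hk
  · simp [hθ0]
  · exact hgap k hk

end ThetaSeq

namespace VIBPGIter

variable {E : Type*} [NormedAddCommGroup E] [InnerProductSpace ℝ E] [FiniteDimensional ℝ E]
  {domφ domP X : Set E} {φ P f : E → ℝ} {gφ gf : E → E} {L τ γ : ℝ} {θ η μ ν : ℕ → ℝ}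
  {x y z zt : ℕ → E}

theorem x_mem (hiter : VIBPGIter domφ domP X φ P gφ gf L τ γ θ η μ ν x y z zt)
    (hconv : Convex ℝ (domP ∩ domφ)) (hθ : ∀ k, θ k ∈ Set.Ioc (0 : ℝ) 1) (k : ℕ) :
    x k ∈ domP ∩ domφ := by
  induction k with
  | zero => exact hiter.hx0
  | succ n ih =>
    rw [hiter.hxrec n]
    exact hconv ih (hiter.hzt n) (sub_nonneg.2 (hθ n).2) (hθ n).1.le (by ring)

theorem y_mem_interior (hiter : VIBPGIter domφ domP X φ P gφ gf L τ γ θ η μ ν x y z zt)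
    (hconv : Convex ℝ domφ) {k : ℕ} (hθ : θ k ∈ Set.Ioc (0 : ℝ) 1) (hxk : x k ∈ domφ) :
    y k ∈ interior domφ := by
  rw [hiter.hy k]
  exact hconv.combo_self_interior_mem_interior hxk (hiter.hz k).2 (sub_nonneg.2 hθ.2) hθ.1
    (by ring)

theorem one_step (hiter : VIBPGIter domφ domP X φ P gφ gf L τ γ θ η μ ν x y z zt)
    {domf : Set E} (hPconv : ConvexOn ℝ domP P) (hfconv : ConvexOn ℝ domf f)
    (hfdom : domφ ⊆ domf) (hfgrad : ∀ u ∈ interior domφ, HasGradientAt f (gf u) u)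
    (hrrse : RestrictedRelSmoothExponent domφ domP X φ f gφ gf L τ γ) (hL : 0 ≤ L) {k : ℕ}
    (hθ : θ k ∈ Set.Ioc (0 : ℝ) 1) (hxk : x k ∈ domP ∩ domφ) (hyk : y k ∈ interior domφ)
    {u : E} (hu : u ∈ domP ∩ domφ) :
    P (x (k + 1)) + f (x (k + 1)) - (P u + f u) ≤
      (1 - θ k) * (P (x k) + f (x k) - (P u + f u))
        + θ k ^ γ * (τ * L * breg φ gφ u (z k) - τ * L * breg φ gφ u (z (k + 1))
          + τ * L * μ k)
        + θ k * (η k * ‖zt (k + 1)‖ + η k * ‖u‖ + ν k) := by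
  obtain ⟨d, hd, hΔ⟩ := hiter.hinex k
  set t := θ k
  have hgradf : ∀ v ∈ domφ, f (y k) + ⟪gf (y k), v - y k⟫ ≤ f v := fun v hv =>
    hfconv.add_inner_le_of_hasGradientAt (hfgrad _ hyk) (hfdom (interior_subset hyk))
      (hfdom hv)
  have hsmooth : breg f gf ((1 - t) • x k + t • zt (k + 1)) (y k) ≤
      τ * L * t ^ γ * breg φ gφ (zt (k + 1)) (z k) := by
    rw [hiter.hy k]
    exact hrrse.2.2 _ hxk _ (hiter.hzt k) _ ⟨(hiter.hz k).2, (hiter.hz k).1⟩ t hθ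
  have hf := apply_combo_le_of_breg_le hθ.1.le hθ.2 (hiter.hy k) (hgradf _ hxk.2)
    (hgradf _ hu.2) hsmooth
  rw [← hiter.hxrec k] at hf
  have hP : P (x (k + 1)) ≤ (1 - t) * P (x k) + t * P (zt (k + 1)) := by
    rw [hiter.hxrec k]
    exact hPconv.2 hxk.1 (hiter.hzt k).1 (sub_nonneg.2 hθ.2) hθ.1.le (by ring)
  have hsub := mul_le_mul_of_nonneg_left (hd u hu.1) hθ.1.le
  have herr : t * ⟪d + gf (y k) + (τ * L * t ^ (γ - 1)) • (gφ (z (k + 1)) - gφ (z k)),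
      zt (k + 1) - u⟫ ≤ t * (η k * (‖zt (k + 1)‖ + ‖u‖)) :=
    mul_le_mul_of_nonneg_left ((real_inner_le_norm _ _).trans
      (mul_le_mul hΔ (norm_sub_le _ _) (norm_nonneg _) (hiter.hη k))) hθ.1.le
  have hdist := mul_le_mul_of_nonneg_left (hiter.hdist k)
    (mul_nonneg (mul_nonneg hrrse.1.le hL) (Real.rpow_nonneg hθ.1.le γ))
  have htc : t * (τ * L * t ^ (γ - 1)) = τ * L * t ^ γ := by
    rw [mul_left_comm, mul_comm t, ← Real.rpow_add_one hθ.1.ne', sub_add_cancel]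
  have hsplit : t * ⟪gf (y k), zt (k + 1) - u⟫ =
      t * ⟪d + gf (y k) + (τ * L * t ^ (γ - 1)) • (gφ (z (k + 1)) - gφ (z k)), zt (k + 1) - u⟫
        + t * ⟪d, u - zt (k + 1)⟫
        + τ * L * t ^ γ * ⟪gφ (z (k + 1)) - gφ (z k), u - zt (k + 1)⟫ := by
    rw [← htc]
    simp only [inner_add_left, real_inner_smul_left, inner_sub_right]
    ring
  rw [inner_sub_eq_breg_three_point] at hsplit
  linarith

theorem scaled_one_step {Q domf : Set E}
    (hiter : VIBPGIter domφ domP X φ P gφ gf L τ γ θ η μ ν x y z zt)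
    (hstand : Standing Q domφ domP domf X φ P f gφ gf L)
    (hrrse : RestrictedRelSmoothExponent domφ domP X φ f gφ gf L τ γ)
    (hθ : ∀ k, θ k ∈ Set.Ioc (0 : ℝ) 1) (k : ℕ) {u : E} (hu : u ∈ domP ∩ domφ) :
    θ k ^ (-γ) * (P (x (k + 1)) + f (x (k + 1)) - (P u + f u))
        + τ * L * breg φ gφ u (z (k + 1)) ≤
      (1 - θ k) * θ k ^ (-γ) * (P (x k) + f (x k) - (P u + f u)) + τ * L * breg φ gφ u (z k)
        + (θ k ^ (1 - γ) * η k * ‖zt (k + 1)‖ + θ k ^ (1 - γ) * η k * ‖u‖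
          + τ * L * μ k + θ k ^ (1 - γ) * ν k) := by
  have hxk := hiter.x_mem (hstand.hPconv.1.inter hstand.hφconv.1) hθ k
  have hstep := hiter.one_step hstand.hPconv hstand.hfconv hstand.hfdom hstand.hfgrad hrrse
    hstand.hLnn (hθ k) hxk (hiter.y_mem_interior hstand.hφconv.1 (hθ k) hxk.2) hu
  exact (rpow_neg_mul_add_le_of_le (hθ k).1 hstep).trans_eq (by ring)

end VIBPGIter

/-- **Telescoped bound for v-iBPG** (Theorem 4.1(i)). Under the standing assumptions and the
restricted relative smoothness exponent assumption, for the v-iBPG iterates, any `k ≥ 0` and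
any `x ∈ dom P ∩ dom φ`,
`F(x^{k+1}) − F(x) ≤ ((α−1)/(k+α−1))^γ (τL D_φ(x, z^0) + e(x) Σ_{i=0}^k ϑ_i
 + Σ_{i=0}^k (θ_i^{1−γ} η_i ‖z̃^{i+1}‖ + θ_i^{1−γ} η_i ‖x‖ + τL μ_i + θ_i^{1−γ} ν_i))`,
where `F = P + f`, `e(x) := F(x) − F*` and `ϑ_i := θ_{i−1}^{−γ} − (1−θ_i)θ_i^{−γ}` (the term
`θ (i-1)` with truncated subtraction at `i = 0` stands for `θ_{−1} = 1`). -/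
theorem vIBPG_telescoped_bound
    {E : Type*} [NormedAddCommGroup E] [InnerProductSpace ℝ E] [FiniteDimensional ℝ E]
    (Q domφ domP domf X : Set E) (φ P f : E → ℝ) (gφ gf : E → E) (L τ γ α : ℝ)
    (hstand : Standing Q domφ domP domf X φ P f gφ gf L)
    (hrrse : RestrictedRelSmoothExponent domφ domP X φ f gφ gf L τ γ)
    (θ η μ ν : ℕ → ℝ) (hθ : ThetaSeq γ α θ)
    (x y z zt : ℕ → E)
    (hiter : VIBPGIter domφ domP X φ P gφ gf L τ γ θ η μ ν x y z zt)
    (Fstar : ℝ) (hFstar : IsGLB ((fun u => P u + f u) '' (domP ∩ domf ∩ Q)) Fstar) :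
    ∀ (k : ℕ), ∀ xx ∈ domP ∩ domφ,
      (P (x (k+1)) + f (x (k+1))) - (P xx + f xx) ≤
        ((α - 1) / ((k : ℝ) + α - 1)) ^ γ *
          (τ * L * breg φ gφ xx (z 0)
            + (P xx + f xx - Fstar) *
                ∑ i ∈ Finset.range (k+1), (θ (i-1) ^ (-γ) - (1 - θ i) * θ i ^ (-γ))
            + ∑ i ∈ Finset.range (k+1),
                (θ i ^ (1 - γ) * η i * ‖zt (i+1)‖ + θ i ^ (1 - γ) * η i * ‖xx‖
                  + τ * L * μ i + θ i ^ (1 - γ) * ν i)) := by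
  intro k u hu
  have hθmem : ∀ j, θ j ∈ Set.Ioc (0 : ℝ) 1 := hθ.2.1
  have hτL : 0 ≤ τ * L := mul_nonneg hrrse.1.le hstand.hLnn
  have hxk := hiter.x_mem (hstand.hPconv.1.inter hstand.hφconv.1) hθmem
  have hF : ∀ w ∈ domP ∩ domφ, Fstar ≤ P w + f w := fun w hw =>
    hFstar.1 ⟨w, ⟨⟨hw.1, hstand.hfdom hw.2⟩, hstand.hφQ ▸ subset_closure hw.2⟩, rfl⟩
  have hbreg : ∀ j, 0 ≤ breg φ gφ u (z j) := fun j => breg_nonneg hstand.hφconv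
    (hstand.hφsmooth.2.1 _ (hiter.hz j).2) (interior_subset (hiter.hz j).2) hu.2
  have htel := add_le_sum_of_weighted_step (w := fun j => θ j ^ (-γ))
    (c := fun j => (1 - θ j) * θ j ^ (-γ)) (a := fun j => P (x j) + f (x j) - (P u + f u))
    (D := fun j => τ * L * breg φ gφ u (z j)) (by simp only [hθ.1, sub_self, zero_mul])
    hθ.gap_nonneg (sub_nonneg.2 (hF u hu)) (fun j => by linarith [hF _ (hxk (j + 1))])
    (fun j => hiter.scaled_one_step hstand hrrse hθmem j hu) k
  refine le_rpow_mul_of_rpow_neg_mul_le (hθmem k).1 (hθ.le_ratio (by linarith [hrrse.2.1]) k)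
    (by linarith [hrrse.2.1]) ?_ (by linarith [mul_nonneg hτL (hbreg (k + 1))])
  refine add_nonneg (add_nonneg (mul_nonneg hτL (hbreg 0)) (mul_nonneg (sub_nonneg.2 (hF u hu))
    (Finset.sum_nonneg fun i _ => hθ.gap_nonneg i))) (Finset.sum_nonneg fun i _ => ?_)
  have := Real.rpow_nonneg (hθmem i).1.le (1 - γ)
  have := hiter.hη i; have := hiter.hμ i; have := hiter.hν i
  positivity
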